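/- Let C ⊆ F_p^n with character sum f(y) = Σ_{c∈C} ω^{c·y}, and let T = {s : C + s = C}. Then f vanishes outside T^⊥, i.e., if y ∉ T^⊥ then f(y) = 0. Conversely, if f(y) = 0 for all y outside a subspace V_0, then V_0^⊥ ⊆ T. -/

import Mathlib

/-!
Translating `C` by an element `s` of its stabilizer multiplies `f(y)` by `ω^{s·y}`, so `f(y) = 0`
unless `s·y = 0`. Conversely, Fourier inversion recovers the indicator of `C` as
`1_C(x) = p^{-n} Σ_y f(y) ω^{-x·y}`. If `f` vanishes off `V₀` and `s ⊥ V₀`, every nonzero term of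
this sum is unchanged when `x` is replaced by `x + s`, so `x ∈ C` forces `x + s ∈ C`.
-/

open Finset

/-- `ω = exp(2πi/p)`. -/
noncomputable def omegaP (p : ℕ) : ℂ := Complex.exp (2 * Real.pi * Complex.I / p)

/-- standard dot product on `F_p^n`. -/
def dotp {p n : ℕ} (x y : Fin n → ZMod p) : ZMod p := ∑ i, x i * y i

/-- character sum `f(y) = Σ_{c ∈ C} ω^{c·y}`. -/
noncomputable def fsum {p n : ℕ} (C : Finset (Fin n → ZMod p)) (y : Fin n → ZMod p) : ℂ :=
  ∑ c ∈ C, omegaP p ^ (dotp c y).val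

open Matrix

section CharSum

variable {R K ι : Type*} [CommRing R] [CommRing K] [Fintype ι]

/-- The character sum `f` of `C`, with an arbitrary additive character `ψ` in place of
`a ↦ ω^a`. -/
def charSum (ψ : AddChar R K) (C : Finset (ι → R)) (y : ι → R) : K :=
  ∑ c ∈ C, ψ (c ⬝ᵥ y)

variable [DecidableEq R] [IsDomain K]

theorem charSum_eq_zero_of_image_add_eq {ψ : AddChar R K} {C : Finset (ι → R)}
    {s y : ι → R} (hC : C.image (· + s) = C) (hsy : ψ (s ⬝ᵥ y) ≠ 1) : charSum ψ C y = 0 := by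
  have hshift : charSum ψ C y = ψ (s ⬝ᵥ y) * charSum ψ C y := by
    conv_lhs => rw [charSum, ← hC, sum_image fun a _ b _ h => add_right_cancel h]
    simp only [charSum, mul_sum, add_dotProduct, AddChar.map_add_eq_mul, mul_comm]
  have : (ψ (s ⬝ᵥ y) - 1) * charSum ψ C y = 0 := by linear_combination -hshift
  exact (mul_eq_zero.mp this).resolve_left (sub_ne_zero.mpr hsy)

variable [Fintype R] [DecidableEq ι]

theorem sum_addChar_dotProduct {ψ : AddChar R K} (hψ : ψ.IsPrimitive) (d : ι → R) :
    ∑ y : ι → R, ψ (d ⬝ᵥ y) = if d = 0 then (Fintype.card (ι → R) : K) else 0 := by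
  let φ : AddChar (ι → R) K := ψ.compAddMonoidHom (AddMonoidHom.mk' (d ⬝ᵥ ·) (dotProduct_add d))
  have hφ : φ = 0 ↔ d = 0 := by
    refine ⟨fun h => ?_, fun h => by ext y; simp [φ, h]⟩
    by_contra hd
    obtain ⟨i, hi⟩ := Function.ne_iff.mp hd
    obtain ⟨t, ht⟩ := AddChar.ne_one_iff.mp (hψ hi)
    refine ht ?_
    simpa [φ, dotProduct_single] using DFunLike.congr_fun h (Pi.single i t)
  exact (AddChar.sum_eq_ite φ).trans (by simp only [hφ])

theorem sum_charSum_mul_addChar_neg_dotProduct {ψ : AddChar R K} (hψ : ψ.IsPrimitive)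
    (C : Finset (ι → R)) (x : ι → R) :
    ∑ y : ι → R, charSum ψ C y * ψ (-(x ⬝ᵥ y)) =
      if x ∈ C then (Fintype.card (ι → R) : K) else 0 := by
  have hterm (y : ι → R) : charSum ψ C y * ψ (-(x ⬝ᵥ y)) = ∑ c ∈ C, ψ ((c - x) ⬝ᵥ y) := by
    simp only [charSum, sum_mul, sub_eq_add_neg, add_dotProduct, neg_dotProduct,
      AddChar.map_add_eq_mul]
  rw [sum_congr rfl fun y _ => hterm y, sum_comm]
  simp only [sum_addChar_dotProduct hψ, sub_eq_zero, sum_ite_eq']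

theorem image_add_eq_of_charSum [CharZero K] {ψ : AddChar R K} (hψ : ψ.IsPrimitive)
    {C : Finset (ι → R)} {s : ι → R} (h : ∀ y, ψ (s ⬝ᵥ y) = 1 ∨ charSum ψ C y = 0) :
    C.image (· + s) = C := by
  have hmem (x : ι → R) (hx : x ∈ C) : x + s ∈ C := by
    have hsum := sum_charSum_mul_addChar_neg_dotProduct hψ C (x + s)
    have hterm (y : ι → R) :
        charSum ψ C y * ψ (-((x + s) ⬝ᵥ y)) = charSum ψ C y * ψ (-(x ⬝ᵥ y)) := by
      rcases h y with hy | hy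
      · have hy' : ψ (-(s ⬝ᵥ y)) = 1 := by
          have := ψ.map_add_eq_mul (-(s ⬝ᵥ y)) (s ⬝ᵥ y)
          rwa [neg_add_cancel, ψ.map_zero_eq_one, hy, mul_one, eq_comm] at this
        rw [add_dotProduct, neg_add, AddChar.map_add_eq_mul, hy', mul_one]
      · rw [hy, zero_mul, zero_mul]
    rw [sum_congr rfl fun y _ => hterm y, sum_charSum_mul_addChar_neg_dotProduct hψ,
      if_pos hx] at hsum
    by_contra hxs
    rw [if_neg hxs] at hsum
    exact Fintype.card_ne_zero (Nat.cast_eq_zero.mp hsum)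
  exact eq_of_subset_of_card_le (image_subset_iff.mpr hmem)
    (card_image_of_injective C (add_left_injective s)).ge

end CharSum

theorem omegaP_pow_val {p : ℕ} [NeZero p] (a : ZMod p) :
    omegaP p ^ a.val = ZMod.stdAddChar a := by
  rw [ZMod.stdAddChar_apply, ZMod.toCircle_apply, omegaP, ← Complex.exp_nat_mul]
  ring_nf

theorem fsum_eq_charSum {p n : ℕ} [NeZero p] (C : Finset (Fin n → ZMod p)) :
    fsum C = charSum ZMod.stdAddChar C :=
  funext fun y => sum_congr rfl fun c _ => omegaP_pow_val (dotp c y)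

/-- The character sum `f` of `C` vanishes outside `T^⊥`, where `T` is the translation
stabilizer of `C`; conversely, if `f` vanishes outside a subspace `V₀`, then `V₀^⊥ ⊆ T`. -/
theorem stmt8 (p n : ℕ) [Fact p.Prime] (C : Finset (Fin n → ZMod p)) :
    (∀ y : Fin n → ZMod p,
      (∃ s : Fin n → ZMod p, C.image (fun c => c + s) = C ∧ dotp s y ≠ 0) →
        fsum C y = 0) ∧
    (∀ V0 : Submodule (ZMod p) (Fin n → ZMod p),
      (∀ y ∉ V0, fsum C y = 0) →
      ∀ s : Fin n → ZMod p, (∀ v ∈ V0, dotp s v = 0) →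
        C.image (fun c => c + s) = C) := by
  have hψ := ZMod.isPrimitive_stdAddChar p
  simp only [fsum_eq_charSum]
  refine ⟨fun y ⟨s, hC, hsy⟩ => charSum_eq_zero_of_image_add_eq hC ?_,
    fun V0 hV s hs => image_add_eq_of_charSum hψ fun y => ?_⟩
  · exact (ZMod.injective_stdAddChar.ne_iff' (AddChar.map_zero_eq_one _)).mpr hsy
  · by_cases hy : y ∈ V0
    · exact Or.inl (by rw [show s ⬝ᵥ y = 0 from hs y hy, AddChar.map_zero_eq_one])
    · exact Or.inr (hV y hy)
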